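/- Fix d ≥ 1 and β ∈ (0, d), and define recursively r₂ = 2β − d and r_{k+1} = (2 − 2^(3k−2)/(2^(3k−2) − (1 − (k+1)β/(kd)))) · r_k for k ≥ 2. Then for every K ≥ 2 there exists β₀ < d such that for all β ∈ (β₀, d), r_k > 0 for all 2 ≤ k ≤ K. Moreover, for fixed k, r_k(β) is increasing in β on a neighborhood of d. -/
import Mathlib


/-- The recursively defined convergence rate `r_k(β)`:
`r₂ = 2β − d` and `r_{k+1} = (2 − 2^(3k−2)/(2^(3k−2) − (1 − (k+1)β/(kd)))) · r_k` for `k ≥ 2`. -/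
noncomputable def rseq (d : ℕ) (β : ℝ) : ℕ → ℝ
  | 0 => 0
  | 1 => 0
  | 2 => 2 * β - d
  | (k + 3) =>
      (2 - (2 : ℝ) ^ (3 * (k + 2) - 2) /
          ((2 : ℝ) ^ (3 * (k + 2) - 2) - (1 - ((k : ℝ) + 3) * β / (((k : ℝ) + 2) * d)))) *
        rseq d β (k + 2)

lemma pow_big (k : ℕ) : (16 : ℝ) ≤ (2 : ℝ) ^ (3 * (k + 2) - 2) := by
  have h : (2 : ℝ) ^ 4 ≤ (2 : ℝ) ^ (3 * (k + 2) - 2) :=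
    pow_le_pow_right₀ one_le_two (by omega)
  norm_num at h
  linarith

lemma t_pos (d k : ℕ) (hd : 1 ≤ d) {β : ℝ} (hβ : 0 < β) :
    0 < ((k : ℝ) + 3) * β / (((k : ℝ) + 2) * d) := by
  have hd' : (0 : ℝ) < (d : ℝ) := by exact_mod_cast Nat.pos_of_ne_zero (by omega)
  positivity

lemma fac_pos (d k : ℕ) (hd : 1 ≤ d) {β : ℝ} (hβ : 0 < β) :
    0 < 2 - (2 : ℝ) ^ (3 * (k + 2) - 2) /
        ((2 : ℝ) ^ (3 * (k + 2) - 2) - (1 - ((k : ℝ) + 3) * β / (((k : ℝ) + 2) * d))) := by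
  set A : ℝ := (2 : ℝ) ^ (3 * (k + 2) - 2) with hA
  set t : ℝ := ((k : ℝ) + 3) * β / (((k : ℝ) + 2) * d) with htdef
  have hA16 : (16 : ℝ) ≤ A := pow_big k
  have ht : 0 < t := t_pos d k hd hβ
  have hD : 0 < A - (1 - t) := by linarith
  rw [sub_pos, div_lt_iff₀ hD]
  linarith

lemma fac_mono (d k : ℕ) (hd : 1 ≤ d) {β₁ β₂ : ℝ} (h1 : 0 < β₁) (h12 : β₁ < β₂) :
    2 - (2 : ℝ) ^ (3 * (k + 2) - 2) /
        ((2 : ℝ) ^ (3 * (k + 2) - 2) - (1 - ((k : ℝ) + 3) * β₁ / (((k : ℝ) + 2) * d)))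
    < 2 - (2 : ℝ) ^ (3 * (k + 2) - 2) /
        ((2 : ℝ) ^ (3 * (k + 2) - 2) - (1 - ((k : ℝ) + 3) * β₂ / (((k : ℝ) + 2) * d))) := by
  set A : ℝ := (2 : ℝ) ^ (3 * (k + 2) - 2) with hA
  have hA16 : (16 : ℝ) ≤ A := pow_big k
  have hAp : 0 < A := by linarith
  have hd' : (0 : ℝ) < (d : ℝ) := by exact_mod_cast Nat.pos_of_ne_zero (by omega)
  have hc : (0 : ℝ) < ((k : ℝ) + 2) * d := by positivity
  have htlt : ((k : ℝ) + 3) * β₁ / (((k : ℝ) + 2) * d)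
      < ((k : ℝ) + 3) * β₂ / (((k : ℝ) + 2) * d) := by
    apply div_lt_div_of_pos_right ?_ hc
    have : (0 : ℝ) < (k : ℝ) + 3 := by positivity
    nlinarith
  set t₁ : ℝ := ((k : ℝ) + 3) * β₁ / (((k : ℝ) + 2) * d)
  set t₂ : ℝ := ((k : ℝ) + 3) * β₂ / (((k : ℝ) + 2) * d)
  have ht₁ : 0 < t₁ := t_pos d k hd h1
  have hD₁ : 0 < A - (1 - t₁) := by linarith
  have hD₂ : 0 < A - (1 - t₂) := by linarith
  have : A / (A - (1 - t₂)) < A / (A - (1 - t₁)) :=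
    div_lt_div_of_pos_left hAp hD₁ (by linarith)
  linarith

lemma rseq_pos (d : ℕ) (hd : 1 ≤ d) {β : ℝ} (h1 : (d : ℝ) / 2 < β) :
    ∀ k : ℕ, 2 ≤ k → 0 < rseq d β k := by
  have hd' : (0 : ℝ) < (d : ℝ) := by exact_mod_cast Nat.pos_of_ne_zero (by omega)
  have hβ : 0 < β := by linarith
  intro k hk
  induction k, hk using Nat.le_induction with
  | base => simp only [rseq]; linarith
  | succ n hn ih =>
    obtain ⟨m, rfl⟩ : ∃ m, n = m + 2 := ⟨n - 2, by omega⟩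
    show 0 < rseq d β (m + 3)
    rw [rseq]
    exact mul_pos (fac_pos d m hd hβ) ih

lemma rseq_mono (d : ℕ) (hd : 1 ≤ d) {β₁ β₂ : ℝ} (h1 : (d : ℝ) / 2 < β₁) (h12 : β₁ < β₂) :
    ∀ k : ℕ, 2 ≤ k → rseq d β₁ k < rseq d β₂ k := by
  have hd' : (0 : ℝ) < (d : ℝ) := by exact_mod_cast Nat.pos_of_ne_zero (by omega)
  have hβ₁ : 0 < β₁ := by linarith
  have hβ₂ : 0 < β₂ := by linarith
  intro k hk
  induction k, hk using Nat.le_induction with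
  | base => simp only [rseq]; linarith
  | succ n hn ih =>
    obtain ⟨m, rfl⟩ : ∃ m, n = m + 2 := ⟨n - 2, by omega⟩
    show rseq d β₁ (m + 3) < rseq d β₂ (m + 3)
    rw [rseq, rseq]
    have hr₁ : 0 < rseq d β₁ (m + 2) := rseq_pos d hd h1 (m + 2) (by omega)
    have hr₂ : 0 < rseq d β₂ (m + 2) := rseq_pos d hd (by linarith) (m + 2) (by omega)
    have hf₂ : 0 < 2 - (2 : ℝ) ^ (3 * (m + 2) - 2) /
        ((2 : ℝ) ^ (3 * (m + 2) - 2) - (1 - ((m : ℝ) + 3) * β₂ / (((m : ℝ) + 2) * d))) :=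
      fac_pos d m hd hβ₂
    have hf : _ < _ := fac_mono d m hd hβ₁ h12
    have hrec : rseq d β₁ (m + 2) < rseq d β₂ (m + 2) := ih
    calc _ < (2 - (2 : ℝ) ^ (3 * (m + 2) - 2) /
          ((2 : ℝ) ^ (3 * (m + 2) - 2) - (1 - ((m : ℝ) + 3) * β₂ / (((m : ℝ) + 2) * d)))) *
        rseq d β₁ (m + 2) := by
          exact mul_lt_mul_of_pos_right hf hr₁
      _ < _ := by exact mul_lt_mul_of_pos_left hrec hf₂

theorem stmt_5 (d : ℕ) (hd : 1 ≤ d) :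
    (∀ K : ℕ, 2 ≤ K → ∃ β₀ : ℝ, β₀ < d ∧ ∀ β : ℝ, β₀ < β → β < d →
      ∀ k : ℕ, 2 ≤ k → k ≤ K → 0 < rseq d β k) ∧
    (∀ k : ℕ, 2 ≤ k → ∃ β₀ : ℝ, β₀ < d ∧ ∀ β₁ β₂ : ℝ, β₀ < β₁ → β₁ < β₂ → β₂ < d →
      rseq d β₁ k < rseq d β₂ k) := by
  have hd' : (0 : ℝ) < (d : ℝ) := by exact_mod_cast Nat.pos_of_ne_zero (by omega)
  constructor
  · intro K _
    exact ⟨(d : ℝ) / 2, by linarith, fun β hβ _ k hk _ => rseq_pos d hd hβ k hk⟩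
  · intro k hk
    exact ⟨(d : ℝ) / 2, by linarith, fun β₁ β₂ h1 h12 _ => rseq_mono d hd h1 h12 k hk⟩
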